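/- (Estimate on the transition coefficients) For every integer k with |k| ≥ 1 there exists a constant C_k > 0 such that for every ρ ∈ (−1,1) and every integer n with |n| ≥ 2|k|, one has |μ_{nk}(ρ)| ≤ C_k · |n|^{|k|} · |ρ|^{|n|/2}. -/

import Mathlib

/-!
For `n ≥ 2` and `k ≥ -1` the only singularity of the integrand inside the unit circle is the pole
of order `n + 2` at `z = -ρ`. Expanding `(1 + ρz)^(n-2)` binomially and `z^m = ((z + ρ) - ρ)^m`
around that pole gives `μ_{nk}` as a finite sum of terms
`C(n-2, i) C(i+k+1, n+1) ρ^i (-ρ)^(i+k-n)`, which vanish unless `n - k ≤ i ≤ n - 2`. So at most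
`k` terms survive, each with binomial factors at most `(2n)^k` and a power of `ρ` of degree at
least `n - k ≥ n/2`. For `n ≤ -2` and `k ≥ -1` the integrand is holomorphic on the closed disc, so
`μ_{nk} = 0`; the substitution `z ↦ 1/z` gives `μ_{-n,-k} = μ_{nk}`, which covers the other signs.
-/

/-- The transition coefficients
`μ_{nk}(ρ) = (1−ρ²)² (1/(2πi)) ∮_{|z|=1} (1+ρz)^{n−2} (z+ρ)^{−(n+2)} z^{k+1} dz`. -/
noncomputable def muCoef (ρ : ℝ) (n k : ℤ) : ℂ :=
  (1 - (ρ : ℂ) ^ 2) ^ 2 * (1 / (2 * Real.pi * Complex.I)) *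
    ∮ z in C(0, 1), (1 + (ρ : ℂ) * z) ^ (n - 2) * (z + (ρ : ℂ)) ^ (-(n + 2)) * z ^ (k + 1)

open Complex Metric
open scoped Real

theorem circleIntegral_comp_inv {E : Type*} [NormedAddCommGroup E] [NormedSpace ℂ E]
    {R : ℝ} (hR : R ≠ 0) (f : ℂ → E) :
    (∮ z in C(0, R), f z) = ∮ z in C(0, R⁻¹), z ^ (-2 : ℤ) • f z⁻¹ := by
  set G : ℝ → E := fun θ ↦ deriv (circleMap 0 R) θ • f (circleMap 0 R θ)
  have hG : Function.Periodic G (2 * π) := fun θ ↦ by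
    simp only [G, periodic_circleMap 0 R θ, deriv_circleMap]
  have hinv : ∀ θ, deriv (circleMap 0 R⁻¹) θ • (circleMap 0 R⁻¹ θ) ^ (-2 : ℤ) •
      f (circleMap 0 R⁻¹ θ)⁻¹ = G (-θ) := fun θ ↦ by
    have hw : circleMap 0 R⁻¹ θ ≠ 0 := circleMap_ne_center (inv_ne_zero hR)
    have hw' : (circleMap 0 R⁻¹ θ)⁻¹ = circleMap 0 R (-θ) := by
      rw [circleMap_zero_inv, inv_inv]
    simp only [G, deriv_circleMap, smul_smul, ← hw']
    congr 1
    rw [zpow_neg, zpow_two]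
    field_simp
  calc (∮ z in C(0, R), f z) = ∫ θ in (0 : ℝ)..0 + 2 * π, G θ := by
        rw [zero_add]; rfl
    _ = ∫ θ in (-(2 * π))..(-(2 * π)) + 2 * π, G θ := hG.intervalIntegral_add_eq 0 _
    _ = ∫ θ in (0 : ℝ)..2 * π, G (-θ) := by
        rw [intervalIntegral.integral_comp_neg, neg_zero, neg_add_cancel]
    _ = ∮ z in C(0, R⁻¹), z ^ (-2 : ℤ) • f z⁻¹ := by
        simp only [circleIntegral, hinv]

theorem sub_ne_zero_of_mem_sphere_of_mem_ball {c a z : ℂ} {R : ℝ} (hz : z ∈ sphere c R)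
    (ha : a ∈ ball c R) : z - a ≠ 0 :=
  sub_ne_zero.2 fun h ↦ (mem_ball.1 ha).ne (h ▸ mem_sphere.1 hz)

theorem circleIntegral_sub_zpow {c a : ℂ} {R : ℝ} (ha : a ∈ ball c R) (m : ℤ) :
    (∮ z in C(c, R), (z - a) ^ m) = if m = -1 then 2 * π * I else 0 := by
  split_ifs with hm
  · simpa [hm] using circleIntegral.integral_sub_inv_of_mem_ball ha
  · exact circleIntegral.integral_sub_zpow_of_ne hm c a R

theorem circleIntegrable_sub_zpow_of_mem_ball {c a : ℂ} {R : ℝ} (ha : a ∈ ball c R) (m : ℤ) :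
    CircleIntegrable (fun z ↦ (z - a) ^ m) c R := by
  refine circleIntegrable_sub_zpow_iff.2 (Or.inr (Or.inr fun h ↦ ?_))
  rw [mem_sphere, abs_of_pos (pos_of_mem_ball ha)] at h
  exact (mem_ball.1 ha).ne h

theorem circleIntegral_pow_mul_sub_zpow {c a : ℂ} {R : ℝ} (ha : a ∈ ball c R) (p q : ℕ) :
    (∮ z in C(c, R), z ^ p * (z - a) ^ (-(q + 1 : ℤ))) =
      2 * π * I * p.choose q * a ^ (p - q) := by
  have hexpand : ∀ z ∈ sphere c R, z ^ p * (z - a) ^ (-(q + 1 : ℤ)) =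
      ∑ j ∈ Finset.range (p + 1), p.choose j * a ^ (p - j) * (z - a) ^ ((j : ℤ) - (q + 1)) := by
    intro z hz
    have hza := sub_ne_zero_of_mem_sphere_of_mem_ball hz ha
    rw [← sub_add_cancel z a, add_pow, Finset.sum_mul, sub_add_cancel]
    refine Finset.sum_congr rfl fun j _ ↦ ?_
    rw [sub_eq_add_neg _ ((q : ℤ) + 1), zpow_add₀ hza, zpow_natCast]
    ring
  rw [circleIntegral.integral_congr (pos_of_mem_ball ha).le hexpand,
    circleIntegral.integral_fun_sum]
  · simp only [circleIntegral.integral_const_mul, circleIntegral_sub_zpow ha, mul_ite, mul_zero]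
    have hidx : ∀ j : ℕ, (j : ℤ) - (q + 1) = -1 ↔ j = q := by omega
    simp only [hidx, Finset.sum_ite_eq', Finset.mem_range]
    split_ifs with hq
    · ring
    · simp [Nat.choose_eq_zero_of_lt (by omega : p < q)]
  · intro j _
    exact (circleIntegrable_sub_zpow_of_mem_ball ha _).const_fun_smul

theorem circleIntegral_one_add_mul_pow_mul_pow_mul_sub_zpow {c a : ℂ} {R : ℝ}
    (ha : a ∈ ball c R) (b : ℂ) (p m q : ℕ) :
    (∮ z in C(c, R), (1 + b * z) ^ p * z ^ m * (z - a) ^ (-(q + 1 : ℤ))) =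
      2 * π * I * ∑ i ∈ Finset.range (p + 1),
        p.choose i * (i + m).choose q * b ^ i * a ^ (i + m - q) := by
  have hexpand : (fun z ↦ (1 + b * z) ^ p * z ^ m * (z - a) ^ (-(q + 1 : ℤ))) = fun z ↦
      ∑ i ∈ Finset.range (p + 1),
        p.choose i * b ^ i * (z ^ (i + m) * (z - a) ^ (-(q + 1 : ℤ))) := by
    funext z
    rw [add_comm, add_pow, Finset.sum_mul, Finset.sum_mul]
    refine Finset.sum_congr rfl fun i _ ↦ ?_
    ring
  rw [hexpand, circleIntegral.integral_fun_sum, Finset.mul_sum]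
  · refine Finset.sum_congr rfl fun i _ ↦ ?_
    rw [circleIntegral.integral_const_mul, circleIntegral_pow_mul_sub_zpow ha]
    ring
  · intro i _
    simpa only [mul_assoc] using (circleIntegrable_sub_zpow_of_mem_ball ha _).fun_continuousOn_mul
      (g := fun z ↦ p.choose i * b ^ i * z ^ (i + m)) (by fun_prop)

theorem Nat.choose_mul_choose_le_two_mul_pow {N K i : ℕ} (hi : i + 2 ≤ N) (hiK : N ≤ i + K)
    (hKN : K ≤ N) : (N - 2).choose i * (i + (K + 1)).choose (N + 1) ≤ (2 * N) ^ K := by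
  have h1 : (N - 2).choose i ≤ (2 * N) ^ (N - 2 - i) := by
    rw [Nat.choose_symm_of_eq_add (by omega : N - 2 = i + (N - 2 - i))]
    exact (Nat.choose_le_pow _ _).trans (Nat.pow_le_pow_left (by omega) _)
  have h2 : (i + (K + 1)).choose (N + 1) ≤ (2 * N) ^ (i + K - N) := by
    rw [Nat.choose_symm_of_eq_add (by omega : i + (K + 1) = (N + 1) + (i + K - N))]
    exact (Nat.choose_le_pow _ _).trans (Nat.pow_le_pow_left (by omega) _)
  calc (N - 2).choose i * (i + (K + 1)).choose (N + 1)
      ≤ (2 * N) ^ (N - 2 - i) * (2 * N) ^ (i + K - N) := Nat.mul_le_mul h1 h2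
    _ = (2 * N) ^ (N - 2 - i + (i + K - N)) := (pow_add _ _ _).symm
    _ ≤ (2 * N) ^ K := Nat.pow_le_pow_right (by omega) (by omega)

section muCoef

variable {ρ : ℝ}

theorem one_add_ofReal_mul_ne_zero (hρ : |ρ| < 1) {z : ℂ} (hz : ‖z‖ ≤ 1) :
    1 + (ρ : ℂ) * z ≠ 0 := by
  intro h
  have : ‖(ρ : ℂ) * z‖ = 1 := by rw [eq_neg_of_add_eq_zero_right h, norm_neg, norm_one]
  rw [norm_mul, norm_real, Real.norm_eq_abs] at this
  nlinarith [abs_nonneg ρ, norm_nonneg z]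

theorem neg_ofReal_mem_ball (hρ : |ρ| < 1) : -(ρ : ℂ) ∈ ball (0 : ℂ) 1 := by
  simpa using hρ

theorem muCoef_neg_neg (n k : ℤ) : muCoef ρ (-n) (-k) = muCoef ρ n k := by
  rw [muCoef, muCoef, circleIntegral_comp_inv one_ne_zero, inv_one]
  congr 1
  refine circleIntegral.integral_congr zero_le_one fun z hz ↦ ?_
  have hz0 : z ≠ 0 := by rintro rfl; simp at hz
  have h1 : 1 + (ρ : ℂ) * z⁻¹ = z⁻¹ * (z + ρ) := by field_simp
  have h2 : z⁻¹ + ρ = z⁻¹ * (1 + ρ * z) := by field_simp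
  simp only [smul_eq_mul, h1, h2, mul_zpow, inv_zpow', neg_neg]
  have hzk : z ^ (k + 1) = z ^ (-2 : ℤ) * z ^ (n + 2) * z ^ (-n + 2) * z ^ (k - 1) := by
    rw [← zpow_add₀ hz0, ← zpow_add₀ hz0, ← zpow_add₀ hz0]
    ring_nf
  rw [hzk, show -(-n - 2) = n + 2 by ring, show -n - 2 = -(n + 2) by ring,
    show -(-n + 2) = n - 2 by ring, show -(-k + 1) = k - 1 by ring]
  ring

theorem muCoef_eq_zero (hρ : |ρ| < 1) {n k : ℤ} (hn : n ≤ -2) (hk : -1 ≤ k) :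
    muCoef ρ n k = 0 := by
  rw [muCoef, DifferentiableOn.diffContOnCl ?_ |>.circleIntegral_eq_zero zero_le_one, mul_zero]
  rw [closure_ball _ one_ne_zero]
  intro z hz
  refine DifferentiableAt.differentiableWithinAt ?_
  have hz' : ‖z‖ ≤ 1 := by simpa using hz
  have h1 : DifferentiableAt ℂ (fun z : ℂ ↦ 1 + (ρ : ℂ) * z) z := by fun_prop
  have h2 : DifferentiableAt ℂ (fun z : ℂ ↦ z + (ρ : ℂ)) z := by fun_prop
  exact ((h1.zpow (Or.inl (one_add_ofReal_mul_ne_zero hρ hz'))).mul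
    (h2.zpow (Or.inr (by omega)))).mul (differentiableAt_id.zpow (Or.inr (by omega)))

/-- The residue at `-ρ` of the `i`-th binomial term of the integrand, divided by `2πi`. The
truncated exponent `i + (K + 1) - (N + 1)` only occurs where the binomial factor vanishes. -/
noncomputable def muCoefTerm (ρ : ℝ) (N K i : ℕ) : ℝ :=
  (N - 2).choose i * (i + (K + 1)).choose (N + 1) * ρ ^ i * (-ρ) ^ (i + (K + 1) - (N + 1))

theorem muCoef_natCast (hρ : |ρ| < 1) {N : ℕ} (hN : 2 ≤ N) (K : ℕ) :
    muCoef ρ N K = ((1 - ρ ^ 2) ^ 2 * ∑ i ∈ Finset.range (N - 1), muCoefTerm ρ N K i : ℝ) := by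
  have hintegrand : (fun z : ℂ ↦ (1 + ρ * z) ^ ((N : ℤ) - 2) * (z + ρ) ^ (-((N : ℤ) + 2)) *
      z ^ ((K : ℤ) + 1)) = fun z : ℂ ↦
        (1 + ρ * z) ^ (N - 2) * z ^ (K + 1) * (z - -(ρ : ℂ)) ^ (-((N + 1 : ℕ) + 1 : ℤ)) := by
    funext z
    rw [show (N : ℤ) - 2 = (N - 2 : ℕ) by omega, zpow_natCast, sub_neg_eq_add,
      show ((K : ℤ) + 1) = (K + 1 : ℕ) by push_cast; ring, zpow_natCast]
    push_cast
    ring_nf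
  rw [muCoef, hintegrand, circleIntegral_one_add_mul_pow_mul_pow_mul_sub_zpow
    (neg_ofReal_mem_ball hρ), show N - 2 + 1 = N - 1 by omega]
  field_simp
  simp only [muCoefTerm]
  push_cast
  ring

theorem muCoefTerm_eq_zero {N K i : ℕ} (h : i + K < N) : muCoefTerm ρ N K i = 0 := by
  simp [muCoefTerm, Nat.choose_eq_zero_of_lt (by omega : i + (K + 1) < N + 1)]

theorem abs_muCoefTerm_le (hρ : |ρ| < 1) {N K i : ℕ} (hKN : 2 * K ≤ N) (hi : N ≤ i + K)
    (hiN : i + 2 ≤ N) : |muCoefTerm ρ N K i| ≤ 2 ^ K * N ^ K * |ρ| ^ ((N : ℝ) / 2) := by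
  have hchoose : ((N - 2).choose i * (i + (K + 1)).choose (N + 1) : ℝ) ≤ 2 ^ K * N ^ K := by
    rw [← mul_pow]
    exact_mod_cast Nat.choose_mul_choose_le_two_mul_pow hiN hi (by omega)
  have hpow : |ρ| ^ i * |ρ| ^ (i + (K + 1) - (N + 1)) ≤ |ρ| ^ ((N : ℝ) / 2) := by
    rw [← pow_add, ← Real.rpow_natCast]
    refine Real.rpow_le_rpow_of_exponent_ge' (abs_nonneg ρ) hρ.le (by positivity) ?_
    rw [div_le_iff₀ two_pos]
    exact_mod_cast (by omega : N ≤ (i + (i + (K + 1) - (N + 1))) * 2)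
  simp only [muCoefTerm, abs_mul, abs_pow, abs_neg, Nat.abs_cast]
  rw [mul_assoc]
  exact mul_le_mul hchoose hpow (by positivity) (by positivity)

theorem norm_muCoef_natCast_le (hρ : |ρ| < 1) {N K : ℕ} (hN : 2 ≤ N) (hKN : 2 * K ≤ N) :
    ‖muCoef ρ N K‖ ≤ K * 2 ^ K * N ^ K * |ρ| ^ ((N : ℝ) / 2) := by
  have hpre : |(1 - ρ ^ 2) ^ 2| ≤ 1 := by
    rw [abs_pow, pow_le_one_iff_of_nonneg (abs_nonneg _) two_ne_zero, abs_le]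
    constructor <;> nlinarith [abs_lt.1 hρ, sq_nonneg ρ]
  have hsupport : ∑ i ∈ Finset.Ico (N - K) (N - 1), muCoefTerm ρ N K i =
      ∑ i ∈ Finset.range (N - 1), muCoefTerm ρ N K i := by
    refine Finset.sum_subset (fun i ↦ by simp only [Finset.mem_Ico, Finset.mem_range]; omega)
      fun i hiN hi ↦ muCoefTerm_eq_zero ?_
    rw [Finset.mem_range] at hiN
    rw [Finset.mem_Ico] at hi
    omega
  have hsum : |∑ i ∈ Finset.Ico (N - K) (N - 1), muCoefTerm ρ N K i|
      ≤ K * (2 ^ K * N ^ K * |ρ| ^ ((N : ℝ) / 2)) := by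
    calc _ ≤ _ := Finset.abs_sum_le_sum_abs _ _
      _ ≤ (Finset.Ico (N - K) (N - 1)).card • (2 ^ K * N ^ K * |ρ| ^ ((N : ℝ) / 2)) :=
        Finset.sum_le_card_nsmul _ _ _ fun i hi ↦ by
          rw [Finset.mem_Ico] at hi
          exact abs_muCoefTerm_le hρ hKN (by omega) (by omega)
      _ ≤ _ := by
        rw [nsmul_eq_mul, Nat.card_Ico]
        gcongr
        exact_mod_cast (by omega : N - 1 - (N - K) ≤ K)
  rw [muCoef_natCast hρ hN, norm_real, Real.norm_eq_abs, abs_mul, ← hsupport]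
  calc _ ≤ 1 * (K * (2 ^ K * N ^ K * |ρ| ^ ((N : ℝ) / 2))) :=
        mul_le_mul hpre hsum (abs_nonneg _) zero_le_one
    _ = _ := by ring

theorem norm_muCoef_natCast_right_le (hρ : |ρ| < 1) {n : ℤ} {K : ℕ} (hn : 2 ≤ |n|)
    (hKn : 2 * K ≤ |n|) :
    ‖muCoef ρ n K‖ ≤ K * 2 ^ K * |(n : ℝ)| ^ K * |ρ| ^ (((|n| : ℤ) : ℝ) / 2) := by
  rcases le_or_gt 0 n with hn0 | hn0
  · lift n to ℕ using hn0
    simp only [Nat.abs_cast, Int.cast_natCast] at hn hKn ⊢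
    exact norm_muCoef_natCast_le hρ (by exact_mod_cast hn) (by exact_mod_cast hKn)
  · rw [abs_of_neg hn0] at hn
    rw [muCoef_eq_zero hρ (by omega) (by omega), norm_zero]
    positivity

end muCoef

/-- Estimate on the transition coefficients: for every `k` with `|k| ≥ 1`
there is `C_k > 0` with `|μ_{nk}(ρ)| ≤ C_k |n|^{|k|} |ρ|^{|n|/2}` whenever
`ρ ∈ (−1,1)` and `|n| ≥ 2|k|`. -/
theorem muCoef_estimate (k : ℤ) (hk : 1 ≤ |k|) :
    ∃ C : ℝ, 0 < C ∧ ∀ ρ ∈ Set.Ioo (-1 : ℝ) 1, ∀ n : ℤ, 2 * |k| ≤ |n| →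
      ‖muCoef ρ n k‖ ≤ C * ((|n| : ℝ) ^ (|k|.toNat)) * |ρ| ^ (((|n| : ℤ) : ℝ) / 2) := by
  have hK : 0 < |k|.toNat := by omega
  refine ⟨|k|.toNat * 2 ^ |k|.toNat, by positivity, fun ρ hρ n hn ↦ ?_⟩
  have hρ' : |ρ| < 1 := abs_lt.2 hρ
  have hn2 : 2 ≤ |n| := by omega
  rcases le_or_gt 0 k with hk0 | hk0
  · lift k to ℕ using hk0
    simp only [Nat.abs_cast, Int.toNat_natCast] at hn ⊢
    exact norm_muCoef_natCast_right_le hρ' hn2 hn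
  · obtain ⟨K, rfl⟩ : ∃ K : ℕ, k = -K := ⟨(-k).toNat, by omega⟩
    simp only [abs_neg, Nat.abs_cast, Int.toNat_natCast] at hn ⊢
    rw [← neg_neg n, muCoef_neg_neg]
    simpa only [abs_neg, Int.cast_neg] using
      norm_muCoef_natCast_right_le hρ' (n := -n) (by rwa [abs_neg]) (by rwa [abs_neg])
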